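/- arXiv:1307.0604 — 3 statements merged into one kernel-verified Lean document; each statement's English description precedes it below -/
import Mathlib

section
/- In a compact topological space, if a subset C is closed, then the Cantor–Bendixson rank of C (computed in the ambient space) is attained: there is a point of C of maximal rank, provided this rank is an ordinal (not ∞), and there are only finitely many points of C attaining the maximal rank. -/
/-- The transfinite Cantor–Bendixson derivative: `CBd X α` is the set of points of
Cantor–Bendixson rank at least `α` (computed in the ambient space `X`). -/
noncomputable def CBd (X : Type*) [TopologicalSpace X] : Ordinal → Set X :=
  fun α => Ordinal.limitRecOn α Set.univ
    (fun _ ih => derivedSet ih)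
    (fun _ _ ih => ⋂ (β : Ordinal) (h : β < _), ih β h)

/-- A point `p` has Cantor–Bendixson rank exactly `α` if `p ∈ CBd X α` but
`p ∉ CBd X (α + 1)`. -/
def HasCBRank (X : Type*) [TopologicalSpace X] (p : X) (α : Ordinal) : Prop :=
  p ∈ CBd X α ∧ p ∉ CBd X (α + 1)

/-!
Every derivative `CBd X α` is closed, even without separation axioms, because it contains its
own derived set `CBd X (α + 1)`. If no point of `C` had maximal rank, the sets
`C ∩ CBd X (rk p + 1)`, `p ∈ C`, would form a directed family of nonempty closed sets, and by
compactness some `x ∈ C` would lie in all of them, in particular in `CBd X (rk x + 1)`.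
If the points of maximal rank `α` were infinitely many, they would accumulate at some point of
`C ∩ CBd X (α + 1)`, which is empty by maximality.
-/

section CantorBendixson

variable {X : Type*} [TopologicalSpace X]

lemma Set.Finite.of_derivedSet_eq_empty [CompactSpace X] {S : Set X}
    (h : derivedSet S = ∅) : S.Finite := by
  by_contra hS
  obtain ⟨x, hx⟩ := Set.Infinite.exists_accPt_principal hS
  exact (h ▸ hx : x ∈ (∅ : Set X))

lemma CBd_zero : CBd X 0 = Set.univ := by
  simp only [CBd, Ordinal.limitRecOn_zero]

lemma CBd_succ (α : Ordinal) : CBd X (α + 1) = derivedSet (CBd X α) := by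
  simp only [CBd, Ordinal.limitRecOn_add_one]

lemma CBd_limit {α : Ordinal} (h : Order.IsSuccLimit α) :
    CBd X α = ⋂ (β : Ordinal) (_ : β < α), CBd X β := by
  simp only [CBd]
  rw [Ordinal.limitRecOn_limit _ _ _ _ h]

lemma CBd_succ_subset (α : Ordinal) : CBd X (α + 1) ⊆ CBd X α := by
  induction α using Ordinal.limitRecOn with
  | zero => exact CBd_zero (X := X) ▸ Set.subset_univ _
  | add_one o ih =>
    rw [CBd_succ (o + 1)]
    exact (derivedSet_mono _ _ ih).trans_eq (CBd_succ o).symm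
  | limit o ho ih =>
    rw [CBd_succ, CBd_limit ho]
    refine Set.subset_iInter₂ fun β hβ => ?_
    calc derivedSet (⋂ (γ : Ordinal) (_ : γ < o), CBd X γ)
        ⊆ derivedSet (CBd X β) := derivedSet_mono _ _ (Set.iInter₂_subset β hβ)
      _ = CBd X (β + 1) := (CBd_succ β).symm
      _ ⊆ CBd X β := ih β hβ

lemma CBd_antitone : Antitone (CBd X) := by
  intro β α hβα
  induction α using Ordinal.limitRecOn with
  | zero => rw [nonpos_iff_eq_zero.mp hβα]
  | add_one o ih =>
    rcases hβα.eq_or_lt with rfl | hlt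
    · exact subset_rfl
    · exact (CBd_succ_subset o).trans (ih (Order.lt_add_one_iff.mp hlt))
  | limit o ho _ =>
    rcases hβα.eq_or_lt with rfl | hlt
    · exact subset_rfl
    · rw [CBd_limit ho]
      exact Set.iInter₂_subset β hlt

lemma isClosed_CBd (α : Ordinal) : IsClosed (CBd X α) := by
  rw [isClosed_iff_derivedSet_subset, ← CBd_succ]
  exact CBd_succ_subset α

lemma HasCBRank.notMem_CBd_of_lt {p : X} {α β : Ordinal} (h : HasCBRank X p α) (hαβ : α < β) :
    p ∉ CBd X β :=
  fun hp => h.2 (CBd_antitone (Order.add_one_le_of_lt hαβ) hp)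

section CompactSpace

variable [CompactSpace X] {C : Set X} {rk : X → Ordinal}

lemma exists_forall_rank_le (hC : IsClosed C) (hCne : C.Nonempty)
    (hrk : ∀ p ∈ C, HasCBRank X p (rk p)) : ∃ p ∈ C, ∀ q ∈ C, rk q ≤ rk p := by
  by_contra! hnomax
  have : Nonempty C := hCne.to_subtype
  let F : C → Set X := fun p => C ∩ CBd X (rk p + 1)
  have hF_closed (p : C) : IsClosed (F p) := hC.inter (isClosed_CBd _)
  have hF_anti {p q : C} (h : rk p ≤ rk q) : F q ⊆ F p :=
    Set.inter_subset_inter_right _ (CBd_antitone (add_le_add_left h 1))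
  have hF_directed : Directed (· ⊇ ·) F := fun p q =>
    (le_total (rk p) (rk q)).elim (fun h => ⟨q, hF_anti h, subset_rfl⟩)
      (fun h => ⟨p, subset_rfl, hF_anti h⟩)
  have hF_nonempty (p : C) : (F p).Nonempty := by
    obtain ⟨q, hqC, hpq⟩ := hnomax p p.2
    exact ⟨q, hqC, CBd_antitone (Order.add_one_le_of_lt hpq) (hrk q hqC).1⟩
  obtain ⟨x, hx⟩ := IsCompact.nonempty_iInter_of_directed_nonempty_isCompact_isClosed F
    hF_directed hF_nonempty (fun p => (hF_closed p).isCompact) hF_closed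
  have hxC : x ∈ C := (Set.mem_iInter.mp hx Classical.ofNonempty).1
  exact (hrk x hxC).2 (Set.mem_iInter.mp hx ⟨x, hxC⟩).2

lemma finite_setOf_rank_eq_of_forall_rank_le (hC : IsClosed C)
    (hrk : ∀ p ∈ C, HasCBRank X p (rk p)) {α : Ordinal} (hα : ∀ q ∈ C, rk q ≤ α) :
    {q ∈ C | rk q = α}.Finite := by
  refine Set.Finite.of_derivedSet_eq_empty (Set.eq_empty_of_forall_notMem fun x hx => ?_)
  have hsub : {q ∈ C | rk q = α} ⊆ CBd X α := fun q ⟨hqC, hq⟩ => hq ▸ (hrk q hqC).1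
  have hxC : x ∈ C :=
    (isClosed_iff_derivedSet_subset C).mp hC (derivedSet_mono _ _ (Set.sep_subset _ _) hx)
  have hxα : x ∈ CBd X (α + 1) := by
    rw [CBd_succ]
    exact derivedSet_mono _ _ hsub hx
  exact (hrk x hxC).notMem_CBd_of_lt (Order.lt_add_one_iff.mpr (hα x hxC)) hxα

end CompactSpace

end CantorBendixson

theorem stmt_3 {X : Type*} [TopologicalSpace X] [CompactSpace X]
    (C : Set X) (hC : IsClosed C) (hCne : C.Nonempty)
    (rk : X → Ordinal) (hrk : ∀ p ∈ C, HasCBRank X p (rk p)) :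
    ∃ p ∈ C, (∀ q ∈ C, rk q ≤ rk p) ∧ {q ∈ C | rk q = rk p}.Finite := by
  obtain ⟨p, hpC, hpmax⟩ := exists_forall_rank_le hC hCne hrk
  exact ⟨p, hpC, hpmax, finite_setOf_rank_eq_of_forall_rank_le hC hrk hpmax⟩
end

section
/- Let M be a first-order structure and let a, b be tuples in M. If tp(a/b) is isolated and b is semi-isolated over a, then tp(b/a) is isolated. -/
/-!
Take θ := φ ∧ ψ. If θ(a, b') holds and ρ(a, b) holds, then b satisfies the formula
χ(y) := ∀ x, φ(x, y) → ρ(x, y), because φ(x, b) isolates tp(a/b). Since ψ(a, y) implies tp(b),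
also χ(b') holds, and φ(a, b') gives ρ(a, b'). Applied to ¬ρ this yields the converse, so θ
isolates tp(b/a). Quantifying over the possibly infinite tuple x is legitimate because only
finitely many of its variables occur free in φ → ρ.
-/

namespace FirstOrder.Language.Formula

variable {L : Language} {M : Type*} [L.Structure M] {α β : Type*}

theorem exists_realize_iff_forall_realize_sumElim [Nonempty (α → M)] (F : L.Formula (α ⊕ β)) :
    ∃ χ : L.Formula β, ∀ v : β → M,
      χ.Realize v ↔ ∀ a : α → M, F.Realize (Sum.elim a v) := by
  classical
  let s := F.freeVarFinset.toLeft
  let f : F.freeVarFinset → β ⊕ s := fun z =>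
    Sum.casesOn (motive := fun w => w ∈ F.freeVarFinset → β ⊕ s) z.1
      (fun x hx => Sum.inr ⟨x, by simpa [s] using hx⟩) (fun y _ => Sum.inl y) z.2
  have realize_restrict (v : β → M) (a : α → M) :
      Realize (F.restrictFreeVar f) (Sum.elim v fun x => a x) ↔
        F.Realize (Sum.elim a v) :=
    BoundedFormula.realize_restrictFreeVar _ fun ⟨z, _⟩ => by cases z <;> rfl
  have restrict_surjective : Function.Surjective fun (a : α → M) (x : s) => a x := by
    obtain ⟨a₀⟩ := ‹Nonempty (α → M)›
    exact fun u => ⟨fun x => if hx : x ∈ s then u ⟨x, hx⟩ else a₀ x, funext fun x => dif_pos x.2⟩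
  refine ⟨iAlls s (F.restrictFreeVar f), fun v => ?_⟩
  rw [realize_iAlls, restrict_surjective.forall]
  exact forall_congr' (realize_restrict v)

theorem realize_of_isolated_of_semiIsolated {a : α → M} {b b' : β → M}
    {φ ψ ρ : L.Formula (α ⊕ β)}
    (hφ : ∀ a' : α → M, φ.Realize (Sum.elim a' b) →
      ∀ σ : L.Formula (α ⊕ β), σ.Realize (Sum.elim a b) → σ.Realize (Sum.elim a' b))
    (hψ : ∀ b' : β → M, ψ.Realize (Sum.elim a b') →
      ∀ χ : L.Formula β, χ.Realize b → χ.Realize b')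
    (hφb' : φ.Realize (Sum.elim a b')) (hψb' : ψ.Realize (Sum.elim a b'))
    (hρ : ρ.Realize (Sum.elim a b)) : ρ.Realize (Sum.elim a b') := by
  have : Nonempty (α → M) := ⟨a⟩
  obtain ⟨χ, hχ⟩ := exists_realize_iff_forall_realize_sumElim (M := M) (φ.imp ρ)
  have hχb : χ.Realize b := (hχ b).2 fun a' hφa' => hφ a' hφa' ρ hρ
  exact (hχ b').1 (hψ b' hψb' χ hχb) a hφb'

end FirstOrder.Language.Formula

open FirstOrder Language

theorem stmt_12 {L : Language} {M : Type*} [L.Structure M]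
    {α β : Type*} (a : α → M) (b : β → M)
    -- tp(a/b) is isolated, by the formula φ(x, b):
    (φ : L.Formula (α ⊕ β))
    (hφ1 : φ.Realize (Sum.elim a b))
    (hφ2 : ∀ a' : α → M, φ.Realize (Sum.elim a' b) →
      ∀ ρ : L.Formula (α ⊕ β), ρ.Realize (Sum.elim a b) ↔ ρ.Realize (Sum.elim a' b))
    -- b is semi-isolated over a, by the formula ψ(a, y):
    (ψ : L.Formula (α ⊕ β))
    (hψ1 : ψ.Realize (Sum.elim a b))
    (hψ2 : ∀ b' : β → M, ψ.Realize (Sum.elim a b') →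
      ∀ χ : L.Formula β, χ.Realize b ↔ χ.Realize b') :
    -- then tp(b/a) is isolated, by some formula θ(a, y):
    ∃ θ : L.Formula (α ⊕ β), θ.Realize (Sum.elim a b) ∧
      ∀ b' : β → M, θ.Realize (Sum.elim a b') →
        ∀ ρ : L.Formula (α ⊕ β), ρ.Realize (Sum.elim a b) ↔ ρ.Realize (Sum.elim a b') := by
  refine ⟨φ ⊓ ψ, Formula.realize_inf.2 ⟨hφ1, hψ1⟩, fun b' hb' ρ => ?_⟩
  rw [Formula.realize_inf] at hb'
  have transfer : ∀ ρ : L.Formula (α ⊕ β),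
      ρ.Realize (Sum.elim a b) → ρ.Realize (Sum.elim a b') := fun ρ =>
    Formula.realize_of_isolated_of_semiIsolated (fun a' h ρ => (hφ2 a' h ρ).1)
      (fun b' h χ => (hψ2 b' h χ).1) hb'.1 hb'.2
  refine ⟨transfer ρ, fun hρ' => by_contra fun hρ => ?_⟩
  exact Formula.realize_not.1 (transfer ρ.not (Formula.realize_not.2 hρ)) hρ'
end

section
/- Let R be a reflexive transitive relation on a set P whose strict part ⟼ (a ⟼ b iff R a b ∧ ¬ R b a) is nonempty, and define ≤ by a ≤ b iff a = b ∨ (Q a b ∧ ∀ t, Q b t → Q a t), where Q is a relation satisfying: (i) Q a b implies R a b, and (ii) a ⟼ b implies Q a b. Then for all a, b, c: if a ⟼ b and R b c, then a ≤ c and ¬ c ≤ a. -/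
theorem stmt_16 {P : Type*} (R Q : P → P → Prop)
    (hrefl : ∀ x, R x x) (htrans : ∀ a b c, R a b → R b c → R a c)
    (hne : ∃ a b : P, R a b ∧ ¬ R b a)
    (hQR : ∀ a b, Q a b → R a b)
    (hstrQ : ∀ a b, (R a b ∧ ¬ R b a) → Q a b)
    (le : P → P → Prop)
    (hle : ∀ a b, le a b ↔ a = b ∨ (Q a b ∧ ∀ t, Q b t → Q a t)) :
    ∀ a b c : P, (R a b ∧ ¬ R b a) → R b c → le a c ∧ ¬ le c a := by
  rintro a b c ⟨hab, hba⟩ hbc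
  have hnca : ¬ R c a := fun h => hba (htrans b c a hbc h)
  have hac : R a c := htrans a b c hab hbc
  constructor
  · rw [hle]
    right
    refine ⟨hstrQ a c ⟨hac, hnca⟩, fun t hct => ?_⟩
    have hct' := hQR c t hct
    exact hstrQ a t ⟨htrans a c t hac hct', fun h => hnca (htrans c t a hct' h)⟩
  · rw [hle]
    rintro (rfl | ⟨hca, _⟩)
    · exact hba hbc
    · exact hnca (hQR c a hca)
end
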